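/- arXiv:2407.08820 — 2 statements merged into one kernel-verified Lean document; each statement's English description precedes it below -/
import Mathlib

section
/- Let δ ≥ 4 and let G be a finite simple graph such that for every induced subgraph H on the vertex set of an odd cycle of G, |E(H)| = (δ+1)(|V(H)|−1)/2 − 1. Then G has no odd cycle, i.e., G is bipartite. -/
/-!
A shortest odd closed walk is a cycle `C`, since a repeated vertex would split it into two
shorter closed walks, one of them odd. For `C` the hypothesis forces the number of edges
induced on `V(C)` to exceed `|C|`, so `C` has a chord, and the chord splits `C` into two
shorter closed walks, one of them odd: a contradiction.
-/

open SimpleGraph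

namespace SimpleGraph.Walk

variable {V : Type*} {G : SimpleGraph V} {u v x : V}

lemma IsSubwalk.exists_length_add_eq {p : G.Walk u v} {r : G.Walk x x} (h : r.IsSubwalk p) :
    ∃ q : G.Walk u v, q.length + r.length = p.length := by
  obtain ⟨a, b, rfl⟩ := h
  exact ⟨a.append b, by simp only [length_append]; omega⟩

lemma two_le_length_of_notMem_edges {p : G.Walk u v} (hne : u ≠ v) (he : s(u, v) ∉ p.edges) :
    2 ≤ p.length := by
  cases p with
  | nil => exact absurd rfl hne
  | cons _ q =>
    cases q with
    | nil => simp at he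
    | cons _ _ => simp

lemma IsCycle.ncard_support {c : G.Walk u u} (hc : c.IsCycle) :
    {v | v ∈ c.support}.ncard = c.length := by
  classical
  have hset : {v | v ∈ c.support} = {v | v ∈ c.tail.support} := by
    ext v
    simp only [Set.mem_ofPred_eq, ← cons_support_tail hc.not_nil, List.mem_cons,
      or_iff_right_iff_imp]
    rintro rfl
    exact c.tail.end_mem_support
  rw [hset, ← List.coe_toFinset, Set.ncard_coe_finset,
    List.toFinset_card_of_nodup hc.isPath_tail.support_nodup, length_support, length_tail_add_one hc.not_nil]

lemma isCycle_of_forall_odd_length_le {w : G.Walk u u} (hw : Odd w.length)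
    (hmin : ∀ v (c : G.Walk v v), Odd c.length → w.length ≤ c.length) : w.IsCycle := by
  refine isCycle_iff_isPath_tail_and_le_length.mpr ⟨?_, ?_⟩
  · refine isPath_iff_isSubwalk_imp_nil.mpr fun x r hr => ?_
    by_contra hr_nil
    have hr_pos : 0 < r.length := not_nil_iff_lt_length.mp hr_nil
    have hr_lt : r.length < w.length := by
      have := length_le_of_isSubwalk hr
      rw [length_tail] at this
      omega
    obtain ⟨q, hq⟩ := (hr.trans (isSubwalk_rfl w).tail).exists_length_add_eq
    rcases Nat.even_or_odd r.length with hr_even | hr_odd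
    · have hq_odd : Odd q.length := (Nat.odd_add.mp (hq ▸ hw)).mpr hr_even
      have := hmin u q hq_odd
      omega
    · have := hmin x r hr_odd
      omega
  · have hlen_ne_one : w.length ≠ 1 := fun h => (w.adj_of_length_eq_one h).ne rfl
    obtain ⟨k, hk⟩ := hw
    omega

lemma exists_adj_notMem_edges_of_length_lt {p : G.Walk u v}
    (hp : p.length < {e ∈ G.edgeSet | ∀ x ∈ e, x ∈ p.support}.ncard) :
    ∃ a b, G.Adj a b ∧ a ∈ p.support ∧ b ∈ p.support ∧ s(a, b) ∉ p.edges := by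
  classical
  have hedges : {e | e ∈ p.edges}.ncard ≤ p.length := by
    rw [← List.coe_toFinset, Set.ncard_coe_finset, ← length_edges]
    exact List.toFinset_card_le _
  obtain ⟨e, ⟨heG, hep⟩, he⟩ := Set.exists_mem_notMem_of_ncard_lt_ncard (hedges.trans_lt hp)
    p.edges.finite_toSet
  induction e using Sym2.ind with
  | _ a b => exact ⟨a, b, heG, hep a (Sym2.mem_mk_left a b), hep b (Sym2.mem_mk_right a b), he⟩

/-- Rotating `c` to start at `a` and splitting it at `b`, the chord `ab` closes up both halves.
Their lengths add up to `c.length + 2`, so one is odd, and each is shorter than `c` because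
neither half is the single edge `ab`. -/
lemma exists_odd_length_lt_of_adj_of_notMem_edges {c : G.Walk u u} (hc : Odd c.length)
    {a b : V} (hab : G.Adj a b) (ha : a ∈ c.support) (hb : b ∈ c.support)
    (he : s(a, b) ∉ c.edges) : ∃ w : G.Walk a a, Odd w.length ∧ w.length < c.length := by
  classical
  set c' := c.rotate a ha
  have hb' : b ∈ c'.support := (mem_support_rotate_iff c a ha).mpr hb
  have he' : s(a, b) ∉ c'.edges := fun h => he ((rotate_edges c a ha).perm.mem_iff.mp h)
  have hsplit := congrArg length (c'.take_spec hb')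
  rw [length_append, length_rotate] at hsplit
  set p := c'.takeUntil b hb'
  set q := c'.dropUntil b hb'
  have hp : 2 ≤ p.length :=
    two_le_length_of_notMem_edges hab.ne fun h => he' (c'.edges_takeUntil_subset_edges hb' h)
  have hq : 2 ≤ q.length := two_le_length_of_notMem_edges hab.ne.symm fun h =>
    he' (c'.edges_dropUntil_subset_edges hb' (Sym2.eq_swap ▸ h))
  rcases Nat.even_or_odd p.length with hp_even | hp_odd
  · refine ⟨p.concat hab.symm, ?_, ?_⟩ <;> rw [length_concat]
    · exact hp_even.add_one
    · omega
  · refine ⟨cons hab q, ?_, ?_⟩ <;> rw [length_cons]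
    · exact ((Nat.odd_add.mp (hsplit ▸ hc)).mp hp_odd).add_one
    · omega

lemma exists_isCycle_odd_length_forall_le {w : G.Walk u u} (hw : Odd w.length) :
    ∃ (v : V) (c : G.Walk v v), c.IsCycle ∧ Odd c.length ∧
      ∀ x (w' : G.Walk x x), Odd w'.length → c.length ≤ w'.length := by
  classical
  have hex : ∃ n, ∃ (v : V) (c : G.Walk v v), Odd c.length ∧ c.length = n := ⟨_, u, w, hw, rfl⟩
  obtain ⟨v, c, hc, hlen⟩ := Nat.find_spec hex
  have hmin : ∀ x (w' : G.Walk x x), Odd w'.length → c.length ≤ w'.length :=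
    fun x w' hw' => hlen ▸ Nat.find_min' hex ⟨x, w', hw', rfl⟩
  exact ⟨v, c, isCycle_of_forall_odd_length_le hc hmin, hc, hmin⟩

end SimpleGraph.Walk

theorem bipartite_of_odd_cycle_edge_count_general {V : Type*}
    (G : SimpleGraph V) (δ : ℕ) (hδ : 4 ≤ δ)
    (hE : ∀ (u : V) (c : G.Walk u u), c.IsCycle → Odd c.length →
      2 * (({e ∈ G.edgeSet | ∀ v ∈ e, v ∈ c.support} : Set (Sym2 V)).ncard + 1) =
        (δ + 1) * (({v | v ∈ c.support} : Set V).ncard - 1)) :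
    (∀ (u : V) (c : G.Walk u u), c.IsCycle → ¬ Odd c.length) ∧ G.Colorable 2 := by
  have no_odd_loop : ∀ (u : V) (w : G.Walk u u), ¬ Odd w.length := by
    intro u w hw
    obtain ⟨v, c, hc, hodd, hmin⟩ := Walk.exists_isCycle_odd_length_forall_le hw
    have hcount := hE v c hc hodd
    rw [hc.ncard_support] at hcount
    have hlt : c.length < {e ∈ G.edgeSet | ∀ x ∈ e, x ∈ c.support}.ncard := by
      have := hc.three_le_length
      have : 5 * (c.length - 1) ≤ (δ + 1) * (c.length - 1) := Nat.mul_le_mul_right _ (by omega)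
      omega
    obtain ⟨a, b, hab, ha, hb, he⟩ := c.exists_adj_notMem_edges_of_length_lt hlt
    obtain ⟨w', hw', hw'_lt⟩ := c.exists_odd_length_lt_of_adj_of_notMem_edges hodd hab ha hb he
    exact (hmin a w' hw').not_gt hw'_lt
  exact ⟨fun u c _ => no_odd_loop u c,
    two_colorable_iff_forall_loop_even.mpr fun u w => Nat.not_odd_iff_even.mp (no_odd_loop u w)⟩

theorem bipartite_of_odd_cycle_edge_count {V : Type*} [Fintype V]
    (G : SimpleGraph V) (δ : ℕ) (hδ : 4 ≤ δ)
    (hE : ∀ (u : V) (c : G.Walk u u), c.IsCycle → Odd c.length →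
      2 * (({e ∈ G.edgeSet | ∀ v ∈ e, v ∈ c.support} : Set (Sym2 V)).ncard + 1) =
        (δ + 1) * (({v | v ∈ c.support} : Set V).ncard - 1)) :
    (∀ (u : V) (c : G.Walk u u), c.IsCycle → ¬ Odd c.length) ∧ G.Colorable 2 :=
  bipartite_of_odd_cycle_edge_count_general G δ hδ hE
end

section
/- In the wheel graph W_n, the central vertex v together with any set of consecutive outer-cycle vertices induces a 2-connected subgraph (a 'slice'), and such a slice is factor-critical if and only if it has an odd number of vertices. -/
open SimpleGraph

/-- The wheel graph with outer cycle on `m` vertices: the vertex `none` is the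
central vertex, adjacent to every outer vertex, and the outer vertices
`some a` form the cycle graph on `m` vertices. The wheel graph `W_n` on `n`
vertices is `wheelGraph (n - 1)`. -/
def wheelGraph (m : ℕ) : SimpleGraph (Option (Fin m)) where
  Adj x y :=
    match x, y with
    | none, none => False
    | none, some _ => True
    | some _, none => True
    | some a, some b => (cycleGraph m).Adj a b
  symm := by
    constructor
    intro x y h
    match x, y with
    | none, some _ => trivial
    | some _, none => trivial
    | some a, some b => exact h.symm
  loopless := by
    constructor
    intro x h
    match x with
    | none => exact h
    | some a => exact (cycleGraph m).irrefl h

/-- A graph is 2-connected if it is connected and has no cut vertex, i.e.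
deleting any vertex leaves a (pre)connected graph. -/
def IsTwoConnected {V : Type*} (G : SimpleGraph V) : Prop :=
  G.Connected ∧ ∀ u : V, (G.induce {v | v ≠ u}).Preconnected

/-- A graph is factor-critical if deleting any vertex leaves a graph with a
perfect matching. -/
def IsFactorCritical {V : Type*} (G : SimpleGraph V) : Prop :=
  ∀ u : V, ∃ M : (G.induce {v | v ≠ u}).Subgraph, M.IsPerfectMatching

/-- The set of `k` consecutive outer-cycle vertices starting at `i`. -/
def consec {m : ℕ} (i : Fin m) (k : ℕ) : Set (Fin m) :=
  {x | ∃ j < k, (x : ℕ) = ((i : ℕ) + j) % m}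

/-!
The slice is the cone, with apex `v`, over a path on `k` vertices. A cone over a connected graph
is 2-connected, since every vertex other than the apex reaches it directly. A factor-critical
graph has odd order, because deleting a vertex leaves a perfect matching. Conversely, if `k` is
even the path has a perfect matching and its cone is factor-critical: deleting the apex leaves
the path, and deleting a path vertex `u` we match the apex with the partner of `u`.
-/

namespace SimpleGraph

variable {V W : Type*} {G : SimpleGraph V} {H : SimpleGraph W}

/-- The cone over `G`: a new apex `none` joined to every vertex `some a`. -/
def cone (G : SimpleGraph V) : SimpleGraph (Option V) where
  Adj x y :=
    match x, y with
    | none, none => False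
    | none, some _ => True
    | some _, none => True
    | some a, some b => G.Adj a b
  symm := ⟨by
    rintro (_ | a) (_ | b) h
    exacts [h, trivial, trivial, G.adj_symm h]⟩
  loopless := ⟨by
    rintro (_ | a) h
    exacts [h, G.loopless.irrefl a h]⟩

@[simp] lemma cone_adj_none_some (a : V) : G.cone.Adj none (some a) := trivial

@[simp] lemma cone_adj_some_none (a : V) : G.cone.Adj (some a) none := trivial

@[simp] lemma cone_adj_some_some {a b : V} : G.cone.Adj (some a) (some b) ↔ G.Adj a b := .rfl

lemma wheelGraph_eq_cone (m : ℕ) : wheelGraph m = (cycleGraph m).cone := by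
  ext (_ | a) (_ | b) <;> rfl

def Embedding.cone (f : G ↪g H) : G.cone ↪g H.cone where
  toEmbedding := f.toEmbedding.optionMap
  map_rel_iff' := by
    rintro (_ | a) (_ | b) <;> simp [Function.Embedding.optionMap]

lemma Embedding.range_cone (f : G ↪g H) :
    Set.range f.cone = insert none (some '' Set.range f) := by
  ext (_ | b) <;> simp [Embedding.cone, Function.Embedding.optionMap]

lemma isTwoConnected_cone (hG : G.Preconnected) : IsTwoConnected G.cone := by
  have reach_apex : ∀ x, G.cone.Reachable x none := by
    rintro (_ | a)
    exacts [.rfl, (cone_adj_some_none a).reachable]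
  refine ⟨⟨fun x y => (reach_apex x).trans (reach_apex y).symm⟩, ?_⟩
  rintro (_ | t)
  · let φ : G →g G.cone.induce {v | v ≠ none} :=
      ⟨fun a => ⟨some a, Option.some_ne_none a⟩, id⟩
    refine hG.map φ ?_
    rintro ⟨_ | a, ha⟩
    exacts [absurd rfl ha, ⟨a, rfl⟩]
  · have reach_apex_ne :
        ∀ x, (G.cone.induce {v | v ≠ some t}).Reachable x ⟨none, by simp⟩ := by
      rintro ⟨_ | a, ha⟩
      exacts [.rfl, Adj.reachable (cone_adj_some_none (G := G) a)]
    exact fun x y => (reach_apex_ne x).trans (reach_apex_ne y).symm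

def Iso.induceNe (e : G ≃g H) (u : V) :
    G.induce {v | v ≠ u} ≃g H.induce {w | w ≠ e u} where
  toEquiv := e.toEquiv.subtypeEquiv fun _ => e.injective.ne_iff.symm
  map_rel_iff' := e.map_rel_iff

lemma Iso.isTwoConnected (e : G ≃g H) (h : IsTwoConnected G) : IsTwoConnected H := by
  refine ⟨e.connected_iff.mp h.1, fun w => ?_⟩
  obtain ⟨u, rfl⟩ := e.surjective w
  exact (e.induceNe u).preconnected_iff.mp (h.2 u)

lemma Iso.exists_isPerfectMatching (e : G ≃g H) (h : ∃ M : G.Subgraph, M.IsPerfectMatching) :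
    ∃ M : H.Subgraph, M.IsPerfectMatching := by
  obtain ⟨M, hM, hspan⟩ := h
  exact ⟨M.map e.toHom, (Subgraph.Iso.isMatching_map e).mpr hM,
    fun w => ⟨e.symm w, hspan _, by simp⟩⟩

lemma Iso.isFactorCritical (e : G ≃g H) (h : IsFactorCritical G) : IsFactorCritical H := by
  intro w
  obtain ⟨u, rfl⟩ := e.surjective w
  exact (e.induceNe u).exists_isPerfectMatching (h u)

lemma _root_.IsFactorCritical.odd_card [Finite V] [Nonempty V] (h : IsFactorCritical G) :
    Odd (Nat.card V) := by
  classical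
  have := Fintype.ofFinite V
  obtain ⟨u⟩ := ‹Nonempty V›
  obtain ⟨M, hM⟩ := h u
  obtain ⟨r, hr⟩ : Even (Fintype.card V - 1) := by
    simpa [Finset.filter_ne', Finset.card_erase_of_mem] using hM.even_card
  have := Fintype.card_pos (α := V)
  exact ⟨r, by rw [Nat.card_eq_fintype_card]; omega⟩

lemma exists_isPerfectMatching_of_involutive {f : V → V} (hf : Function.Involutive f)
    (hadj : ∀ v, G.Adj v (f v)) : ∃ M : G.Subgraph, M.IsPerfectMatching := by
  refine ⟨⟨Set.univ, fun v w => f v = w, ?_, fun _ => trivial, ⟨?_⟩⟩, fun v _ => ?_,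
    fun _ => trivial⟩
  · rintro v _ rfl
    exact hadj v
  · rintro v _ rfl
    exact hf v
  · exact ⟨f v, rfl, fun _ => Eq.symm⟩

lemma isFactorCritical_of_involutive
    (h : ∀ u, ∃ f : V → V, Function.Involutive f ∧ f u = u ∧ ∀ v ≠ u, G.Adj v (f v)) :
    IsFactorCritical G := by
  intro u
  obtain ⟨f, hf, hfu, hadj⟩ := h u
  have hne : ∀ v ≠ u, f v ≠ u := fun v hv hfv => hv (by rw [← hf v, hfv, hfu])
  exact exists_isPerfectMatching_of_involutive (f := fun v => ⟨f v, hne v v.2⟩)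
    (fun v => Subtype.ext (hf v)) (fun v => hadj v v.2)

lemma isFactorCritical_cone {q : V → V} (hq : Function.Involutive q)
    (hadj : ∀ a, G.Adj a (q a)) : IsFactorCritical G.cone := by
  classical
  refine isFactorCritical_of_involutive fun u => ?_
  -- Conjugating by the swap of the apex and `u` fixes `u` and matches `u`'s partner to the apex.
  let τ := Equiv.swap none u
  refine ⟨τ ∘ Option.map q ∘ τ, fun x => ?_, by simp [τ], fun v hv => ?_⟩
  · simp [τ, Option.map_map, hq.comp_self]
  · obtain ⟨b, hb⟩ : ∃ b, τ v = some b :=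
      Option.ne_none_iff_exists'.mp (by simpa [τ, Equiv.swap_apply_eq_iff] using hv)
    obtain rfl : v = τ (some b) := by rw [← hb, Equiv.swap_apply_self]
    rw [Function.comp_apply, Function.comp_apply, Equiv.swap_apply_self, Option.map_some]
    rcases u with _ | t
    · simpa [τ] using hadj b
    have hqb : q b ≠ b := (hadj b).ne.symm
    by_cases hbt : b = t
    · subst hbt
      simp [τ, Equiv.swap_apply_of_ne_of_ne, hqb]
    by_cases hqt : q b = t
    · subst hqt
      simp [τ, Equiv.swap_apply_of_ne_of_ne, hbt]
    · simpa [τ, Equiv.swap_apply_of_ne_of_ne, hbt, hqt] using hadj b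

lemma pathGraph_exists_involutive_adj {k : ℕ} (hk : Even k) :
    ∃ q : Fin k → Fin k, Function.Involutive q ∧ ∀ a, (pathGraph k).Adj a (q a) := by
  obtain ⟨r, rfl⟩ := hk
  refine ⟨fun a => ⟨if a.val % 2 = 0 then a + 1 else a - 1, by split_ifs <;> omega⟩,
    fun a => ?_, fun a => ?_⟩
  · ext; dsimp only; split_ifs <;> omega
  · rw [pathGraph_adj]; dsimp only; split_ifs <;> omega

end SimpleGraph

lemma Fin.val_castLE_sub_castLE_eq_one_iff {k m : ℕ} (hk : k < m) {a b : Fin k} :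
    (Fin.castLE hk.le a - Fin.castLE hk.le b).val = 1 ↔ b.val + 1 = a.val := by
  rcases le_or_gt (Fin.castLE hk.le b) (Fin.castLE hk.le a) with h | h
  · rw [Fin.coe_sub_iff_le.mpr h]
    simp only [Fin.val_castLE]
    omega
  · rw [Fin.coe_sub_iff_lt.mpr h]
    have : a.val < b.val := h
    simp only [Fin.val_castLE]
    omega

def pathGraphEmbeddingCycleGraph {k m : ℕ} (i : Fin m) (hk : k < m) :
    pathGraph k ↪g cycleGraph m where
  toFun j := i + Fin.castLE hk.le j
  inj' := (add_right_injective i).comp (Fin.castLE_injective hk.le)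
  map_rel_iff' := by
    intro a b
    have : NeZero m := ⟨i.pos.ne'⟩
    simp only [Function.Embedding.coeFn_mk, cycleGraph_adj', add_sub_add_left_eq_sub,
      Fin.val_castLE_sub_castLE_eq_one_iff hk, pathGraph_adj]
    exact or_comm

lemma consec_eq_range {k m : ℕ} (i : Fin m) (hk : k < m) :
    consec i k = Set.range (pathGraphEmbeddingCycleGraph i hk) := by
  ext x
  simp only [consec, Set.mem_ofPred_eq, Set.mem_range, pathGraphEmbeddingCycleGraph,
    RelEmbedding.coe_mk, Function.Embedding.coeFn_mk, Fin.ext_iff, Fin.val_add, Fin.val_castLE]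
  constructor
  · rintro ⟨j, hj, hx⟩
    exact ⟨⟨j, hj⟩, hx.symm⟩
  · rintro ⟨j, hx⟩
    exact ⟨j, j.2, hx.symm⟩

theorem wheelGraph_slices_general (m : ℕ) (i : Fin m) (k : ℕ) (hk2 : k < m) :
    IsTwoConnected ((wheelGraph m).induce (insert none (some '' consec i k))) ∧
    (IsFactorCritical ((wheelGraph m).induce (insert none (some '' consec i k))) ↔
      Odd (insert none (some '' consec i k) : Set (Option (Fin m))).ncard) := by
  have e : (pathGraph k).cone ≃g (wheelGraph m).induce (insert none (some '' consec i k)) := by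
    rw [consec_eq_range i hk2, ← Embedding.range_cone, wheelGraph_eq_cone]
    exact (pathGraphEmbeddingCycleGraph i hk2).cone.isoInduceRange
  have : Nonempty (insert none (some '' consec i k) : Set (Option (Fin m))) :=
    ⟨⟨none, Set.mem_insert _ _⟩⟩
  have hcard : (insert none (some '' consec i k) : Set (Option (Fin m))).ncard = k + 1 := by
    rw [← Nat.card_coe_set_eq, ← Nat.card_congr e.toEquiv]
    simp
  refine ⟨e.isTwoConnected (isTwoConnected_cone (pathGraph_preconnected k)), fun h => ?_,
    fun hodd => ?_⟩
  · rw [← Nat.card_coe_set_eq]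
    exact h.odd_card
  · rw [hcard, Nat.odd_add_one, Nat.not_odd_iff_even] at hodd
    obtain ⟨q, hq, hadj⟩ := pathGraph_exists_involutive_adj hodd
    exact e.isFactorCritical (isFactorCritical_cone hq hadj)

theorem wheelGraph_slices (m : ℕ) (hm : 3 ≤ m) (i : Fin m) (k : ℕ)
    (hk1 : 1 ≤ k) (hk2 : k < m) :
    IsTwoConnected ((wheelGraph m).induce (insert none (some '' consec i k))) ∧
    (IsFactorCritical ((wheelGraph m).induce (insert none (some '' consec i k))) ↔
      Odd (insert none (some '' consec i k) : Set (Option (Fin m))).ncard) :=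
  wheelGraph_slices_general m i k hk2
end
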